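/- arXiv:1609.05177 — 3 statements merged into one kernel-verified Lean document; each statement's English description precedes it below -/
import Mathlib

section
/- Let λ: ℝ₊ → ℝ₊ be integrable with ‖λ‖₁ < 1 and first moment m₁ = ∫₀^∞ x λ(x) dx < ∞, and let (a_T) ⊂ (0,1) with a_T → 1. Define ψ^T = ∑_{k≥1} a_T^k λ^{*k} and g^T(x) = ∫_{Tx}^∞ ψ^T(u) du. Then ∫₀^∞ |g^T(x)|² dx ≤ c/T for some constant c independent of T; in particular ∫₀^∞ |g^T(x)|² dx → 0 as T → ∞. -/
open MeasureTheory Filter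

noncomputable def sconv (f g : ℝ → ℝ) : ℝ → ℝ :=
  fun t => ∫ s in (0:ℝ)..t, f s * g (t - s)

/-- `sconvPow f k` is the (k+1)-st scalar convolution power λ^{*(k+1)}. -/
noncomputable def sconvPow (f : ℝ → ℝ) : ℕ → ℝ → ℝ
  | 0 => f
  | (k + 1) => sconv f (sconvPow f k)

/-!
Mass and first moment of a convolution on the half-line, computed with lower Lebesgue integrals,
are multiplicative and obey the Leibniz rule, so `λ^{*(k+1)}` has mass `‖λ‖₁^(k+1)` and first moment
`(k+1) ‖λ‖₁^k m₁`. As `a_T ≤ 1`, every `ψ^T` is dominated by `∑ₖ λ^{*(k+1)}`, whose mass `M` and first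
moment `m` are finite because `‖λ‖₁ < 1`. The tail `G(y) = ∫_y^∞ ψ^T` then satisfies `G ≤ M` and
`y G(y) ≤ m` (Markov), hence `G(y)² (1 + y²) ≤ M² + m²`, and substituting `y = T x` gives
`∫₀^∞ G(T x)² dx ≤ (M² + m²) (π / 2) / T`.
-/

open Set Real
open scoped ENNReal

theorem lintegral_lconvolution {G : Type*} [MeasurableSpace G] [AddGroup G] [MeasurableAdd₂ G]
    [MeasurableNeg G] {μ : Measure G} [μ.IsAddLeftInvariant] [SFinite μ] {f g : G → ℝ≥0∞}
    (hf : AEMeasurable f μ) (hg : AEMeasurable g μ) :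
    ∫⁻ x, (f ⋆ₗ[μ] g) x ∂μ = (∫⁻ x, f x ∂μ) * ∫⁻ x, g x ∂μ := by
  simp only [lconvolution_def]
  rw [lintegral_lintegral_swap (by fun_prop)]
  have hg' : ∀ y, AEMeasurable (fun x => g (-y + x)) μ := fun y =>
    hg.comp_quasiMeasurePreserving (measurePreserving_add_left μ _).quasiMeasurePreserving
  simp_rw [lintegral_const_mul'' _ (hg' _), lintegral_add_left_eq_self]
  exact lintegral_mul_const'' _ hf

section HalfLine

variable {f g : ℝ → ℝ≥0∞}

/-- The weight `x = y + (x - y)` splits between the two factors, since both vanish on `Iio 0`. -/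
theorem ofReal_mul_lconvolution (hf : ∀ x < 0, f x = 0) (hg : ∀ x < 0, g x = 0)
    (hfm : Measurable f) (hgm : Measurable g) (x : ℝ) :
    ENNReal.ofReal x * (f ⋆ₗ g) x =
      ((fun y => ENNReal.ofReal y * f y) ⋆ₗ g) x + (f ⋆ₗ fun y => ENNReal.ofReal y * g y) x := by
  simp only [lconvolution_def]
  rw [← lintegral_const_mul' _ _ ENNReal.ofReal_ne_top, ← lintegral_add_left (by fun_prop)]
  refine lintegral_congr fun y => ?_
  rcases lt_or_ge y 0 with hy | hy
  · simp [hf y hy]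
  rcases lt_or_ge (-y + x) 0 with hxy | hxy
  · simp [hg _ hxy]
  have hsplit : ENNReal.ofReal x = ENNReal.ofReal y + ENNReal.ofReal (-y + x) := by
    rw [← ENNReal.ofReal_add hy hxy, add_neg_cancel_left]
  rw [hsplit]
  ring

theorem lintegral_ofReal_mul_lconvolution (hf : ∀ x < 0, f x = 0) (hg : ∀ x < 0, g x = 0)
    (hfm : Measurable f) (hgm : Measurable g) :
    ∫⁻ x, ENNReal.ofReal x * (f ⋆ₗ g) x =
      (∫⁻ x, ENNReal.ofReal x * f x) * (∫⁻ x, g x) + (∫⁻ x, f x) * ∫⁻ x, ENNReal.ofReal x * g x := by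
  simp_rw [ofReal_mul_lconvolution hf hg hfm hgm]
  rw [lintegral_add_left (measurable_lconvolution _ (by fun_prop) hgm),
    lintegral_lconvolution (by fun_prop) hgm.aemeasurable,
    lintegral_lconvolution hfm.aemeasurable (by fun_prop)]

theorem lintegral_eq_setLIntegral_Ioi (hf : ∀ x < 0, f x = 0) :
    ∫⁻ x, f x = ∫⁻ x in Ioi 0, f x := by
  rw [setLIntegral_congr Ioi_ae_eq_Ici, setLIntegral_eq_of_support_subset]
  intro x hx
  by_contra h
  exact hx (hf x (not_le.1 h))

end HalfLine

theorem ENNReal.tsum_succ_mul_pow_ne_top {r : ℝ≥0∞} (hr : r < 1) :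
    ∑' n : ℕ, (n + 1 : ℝ≥0∞) * r ^ n ≠ ∞ := by
  lift r to NNReal using hr.ne_top
  have hr' : ‖(r : ℝ)‖ < 1 := by simpa using hr
  have hs : Summable fun n : ℕ => ((n + 1) * r ^ n : NNReal) := by
    rw [← NNReal.summable_coe]
    push_cast
    simpa [add_mul] using (summable_pow_mul_geometric_of_norm_lt_one 1 hr').add
      (summable_geometric_of_norm_lt_one hr')
  simpa using ENNReal.tsum_coe_ne_top_iff_summable.2 hs

section Sconv

variable {f g : ℝ → ℝ}

theorem mul_apply_sub_eq_zero_of_neg (hf : ∀ x < 0, f x = 0) (hg : ∀ x < 0, g x = 0) {t : ℝ}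
    (ht : t < 0) (s : ℝ) : f s * g (t - s) = 0 := by
  rcases lt_or_ge s 0 with hs | hs
  · simp [hf s hs]
  · simp [hg (t - s) (by linarith)]

theorem sconv_of_neg (hf : ∀ x < 0, f x = 0) (hg : ∀ x < 0, g x = 0) {t : ℝ} (ht : t < 0) :
    sconv f g t = 0 := by
  simp [sconv, mul_apply_sub_eq_zero_of_neg hf hg ht]

theorem sconv_eq_integral (hf : ∀ x < 0, f x = 0) (hg : ∀ x < 0, g x = 0) (t : ℝ) :
    sconv f g t = ∫ s, f s * g (t - s) := by
  rcases lt_or_ge t 0 with ht | ht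
  · simp [sconv_of_neg hf hg ht, mul_apply_sub_eq_zero_of_neg hf hg ht]
  · rw [sconv, intervalIntegral.integral_of_le ht, ← integral_Icc_eq_integral_Ioc]
    refine setIntegral_eq_integral_of_forall_compl_eq_zero fun s hs => ?_
    rcases lt_or_ge s 0 with hs0 | hs0
    · simp [hf s hs0]
    · simp [hg (t - s) (by simp_all)]

theorem sconv_nonneg (hf0 : ∀ x, 0 ≤ f x) (hg0 : ∀ x, 0 ≤ g x)
    (hf : ∀ x < 0, f x = 0) (hg : ∀ x < 0, g x = 0) (t : ℝ) : 0 ≤ sconv f g t := by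
  rw [sconv_eq_integral hf hg]
  exact integral_nonneg fun s => mul_nonneg (hf0 s) (hg0 _)

theorem measurable_sconv (hfm : Measurable f) (hgm : Measurable g)
    (hf : ∀ x < 0, f x = 0) (hg : ∀ x < 0, g x = 0) : Measurable (sconv f g) := by
  have hprod : Measurable fun p : ℝ × ℝ => f p.2 * g (p.1 - p.2) := by fun_prop
  rw [funext (sconv_eq_integral hf hg)]
  exact hprod.stronglyMeasurable.integral_prod_right'.measurable

theorem ofReal_sconv_le (hfm : Measurable f) (hgm : Measurable g) (hf0 : ∀ x, 0 ≤ f x)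
    (hg0 : ∀ x, 0 ≤ g x) (hf : ∀ x < 0, f x = 0) (hg : ∀ x < 0, g x = 0) (t : ℝ) :
    ENNReal.ofReal (sconv f g t) ≤
      ((fun x => ENNReal.ofReal (f x)) ⋆ₗ fun x => ENNReal.ofReal (g x)) t := by
  rw [sconv_eq_integral hf hg, integral_eq_lintegral_of_nonneg_ae
    (.of_forall fun s => mul_nonneg (hf0 s) (hg0 _)) (by fun_prop)]
  refine ENNReal.ofReal_toReal_le.trans_eq (lintegral_congr fun s => ?_)
  rw [ENNReal.ofReal_mul (hf0 s), neg_add_eq_sub]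

end Sconv

section SconvPow

variable {lam : ℝ → ℝ}

theorem sconvPow_of_neg (hsupp : ∀ x < 0, lam x = 0) : ∀ k, ∀ x < 0, sconvPow lam k x = 0
  | 0 => hsupp
  | k + 1 => fun _ hx => sconv_of_neg hsupp (sconvPow_of_neg hsupp k) hx

theorem sconvPow_nonneg (hnn : ∀ x, 0 ≤ lam x) (hsupp : ∀ x < 0, lam x = 0) :
    ∀ k x, 0 ≤ sconvPow lam k x
  | 0 => hnn
  | k + 1 => sconv_nonneg hnn (sconvPow_nonneg hnn hsupp k) hsupp (sconvPow_of_neg hsupp k)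

theorem measurable_sconvPow (hmeas : Measurable lam) (hsupp : ∀ x < 0, lam x = 0) :
    ∀ k, Measurable (sconvPow lam k)
  | 0 => hmeas
  | k + 1 =>
    measurable_sconv hmeas (measurable_sconvPow hmeas hsupp k) hsupp (sconvPow_of_neg hsupp k)

theorem ofReal_sconvPow_succ_le (hmeas : Measurable lam) (hnn : ∀ x, 0 ≤ lam x)
    (hsupp : ∀ x < 0, lam x = 0) (k : ℕ) (x : ℝ) :
    ENNReal.ofReal (sconvPow lam (k + 1) x) ≤
      ((fun y => ENNReal.ofReal (lam y)) ⋆ₗ fun y => ENNReal.ofReal (sconvPow lam k y)) x :=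
  ofReal_sconv_le hmeas (measurable_sconvPow hmeas hsupp k) hnn (sconvPow_nonneg hnn hsupp k)
    hsupp (sconvPow_of_neg hsupp k) x

theorem lintegral_sconvPow_le (hmeas : Measurable lam) (hnn : ∀ x, 0 ≤ lam x)
    (hsupp : ∀ x < 0, lam x = 0) (k : ℕ) :
    ∫⁻ x, ENNReal.ofReal (sconvPow lam k x) ≤ (∫⁻ x, ENNReal.ofReal (lam x)) ^ (k + 1) := by
  induction k with
  | zero => simp [sconvPow]
  | succ k ih =>
    have hk := measurable_sconvPow hmeas hsupp k
    calc ∫⁻ x, ENNReal.ofReal (sconvPow lam (k + 1) x)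
        ≤ ∫⁻ x, ((fun y => ENNReal.ofReal (lam y)) ⋆ₗ
            fun y => ENNReal.ofReal (sconvPow lam k y)) x :=
          lintegral_mono (ofReal_sconvPow_succ_le hmeas hnn hsupp k)
      _ = (∫⁻ x, ENNReal.ofReal (lam x)) * ∫⁻ x, ENNReal.ofReal (sconvPow lam k x) :=
          lintegral_lconvolution (by fun_prop) (by fun_prop)
      _ ≤ (∫⁻ x, ENNReal.ofReal (lam x)) ^ (k + 1 + 1) := by
          rw [pow_succ' _ (k + 1)]
          gcongr

theorem lintegral_ofReal_mul_sconvPow_le (hmeas : Measurable lam) (hnn : ∀ x, 0 ≤ lam x)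
    (hsupp : ∀ x < 0, lam x = 0) (k : ℕ) :
    ∫⁻ x, ENNReal.ofReal x * ENNReal.ofReal (sconvPow lam k x) ≤
      (k + 1) * (∫⁻ x, ENNReal.ofReal (lam x)) ^ k *
        ∫⁻ x, ENNReal.ofReal x * ENNReal.ofReal (lam x) := by
  set L := ∫⁻ x, ENNReal.ofReal (lam x)
  set m := ∫⁻ x, ENNReal.ofReal x * ENNReal.ofReal (lam x)
  induction k with
  | zero => simp [sconvPow, m]
  | succ k ih =>
    have hk := measurable_sconvPow hmeas hsupp k
    have hvanish : ∀ {u : ℝ → ℝ}, (∀ x < 0, u x = 0) → ∀ x < 0, ENNReal.ofReal (u x) = 0 :=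
      fun hu x hx => by simp [hu x hx]
    calc ∫⁻ x, ENNReal.ofReal x * ENNReal.ofReal (sconvPow lam (k + 1) x)
        ≤ ∫⁻ x, ENNReal.ofReal x * ((fun y => ENNReal.ofReal (lam y)) ⋆ₗ
            fun y => ENNReal.ofReal (sconvPow lam k y)) x := by
          gcongr with x
          exact ofReal_sconvPow_succ_le hmeas hnn hsupp k x
      _ = m * (∫⁻ x, ENNReal.ofReal (sconvPow lam k x)) +
            L * ∫⁻ x, ENNReal.ofReal x * ENNReal.ofReal (sconvPow lam k x) :=
          lintegral_ofReal_mul_lconvolution (hvanish hsupp) (hvanish (sconvPow_of_neg hsupp k))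
            (by fun_prop) (by fun_prop)
      _ ≤ m * L ^ (k + 1) + L * ((k + 1) * L ^ k * m) := by
          gcongr
          exact lintegral_sconvPow_le hmeas hnn hsupp k
      _ = (↑(k + 1) + 1) * L ^ (k + 1) * m := by
          push_cast
          ring

theorem lintegral_tsum_sconvPow_lt_top (hmeas : Measurable lam) (hnn : ∀ x, 0 ≤ lam x)
    (hsupp : ∀ x < 0, lam x = 0) (hL : ∫⁻ x, ENNReal.ofReal (lam x) < 1) :
    ∫⁻ x, ∑' k, ENNReal.ofReal (sconvPow lam k x) < ∞ := by
  have hk := measurable_sconvPow hmeas hsupp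
  rw [lintegral_tsum fun k => by fun_prop]
  calc ∑' k, ∫⁻ x, ENNReal.ofReal (sconvPow lam k x)
      ≤ ∑' k, (∫⁻ x, ENNReal.ofReal (lam x)) ^ (k + 1) :=
        ENNReal.tsum_le_tsum (lintegral_sconvPow_le hmeas hnn hsupp)
    _ = (∫⁻ x, ENNReal.ofReal (lam x)) * (1 - ∫⁻ x, ENNReal.ofReal (lam x))⁻¹ :=
        ENNReal.tsum_geometric_add_one _
    _ < ∞ := ENNReal.mul_lt_top (hL.trans ENNReal.one_lt_top)
        (ENNReal.inv_lt_top.2 (tsub_pos_of_lt hL))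

theorem lintegral_ofReal_mul_tsum_sconvPow_lt_top (hmeas : Measurable lam)
    (hnn : ∀ x, 0 ≤ lam x) (hsupp : ∀ x < 0, lam x = 0)
    (hL : ∫⁻ x, ENNReal.ofReal (lam x) < 1)
    (hm : ∫⁻ x, ENNReal.ofReal x * ENNReal.ofReal (lam x) < ∞) :
    ∫⁻ x, ENNReal.ofReal x * ∑' k, ENNReal.ofReal (sconvPow lam k x) < ∞ := by
  have hk := measurable_sconvPow hmeas hsupp
  simp_rw [← ENNReal.tsum_mul_left]
  rw [lintegral_tsum fun k => by fun_prop]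
  calc ∑' k, ∫⁻ x, ENNReal.ofReal x * ENNReal.ofReal (sconvPow lam k x)
      ≤ ∑' k : ℕ, (k + 1) * (∫⁻ x, ENNReal.ofReal (lam x)) ^ k *
          ∫⁻ x, ENNReal.ofReal x * ENNReal.ofReal (lam x) :=
        ENNReal.tsum_le_tsum (lintegral_ofReal_mul_sconvPow_le hmeas hnn hsupp)
    _ < ∞ := by
        rw [ENNReal.tsum_mul_right]
        exact ENNReal.mul_lt_top (ENNReal.tsum_succ_mul_pow_ne_top hL).lt_top hm

end SconvPow

noncomputable def sconvResolvent (lam : ℝ → ℝ) (r : ℝ) : ℝ → ℝ :=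
  fun x => ∑' k : ℕ, r ^ (k + 1) * sconvPow lam k x

section SconvResolvent

variable {lam : ℝ → ℝ} {r : ℝ}

theorem measurable_sconvResolvent (hmeas : Measurable lam) (hsupp : ∀ x < 0, lam x = 0) :
    Measurable (sconvResolvent lam r) :=
  Measurable.tsum fun k => (measurable_sconvPow hmeas hsupp k).const_mul _

theorem sconvResolvent_nonneg (hnn : ∀ x, 0 ≤ lam x) (hsupp : ∀ x < 0, lam x = 0)
    (hr : 0 ≤ r) (x : ℝ) : 0 ≤ sconvResolvent lam r x :=
  tsum_nonneg fun k => mul_nonneg (pow_nonneg hr _) (sconvPow_nonneg hnn hsupp k x)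

theorem ofReal_sconvResolvent_le (hnn : ∀ x, 0 ≤ lam x) (hsupp : ∀ x < 0, lam x = 0)
    (hr₀ : 0 ≤ r) (hr₁ : r ≤ 1) (x : ℝ) :
    ENNReal.ofReal (sconvResolvent lam r x) ≤ ∑' k, ENNReal.ofReal (sconvPow lam k x) := by
  have hterm : ∀ k, 0 ≤ r ^ (k + 1) * sconvPow lam k x := fun k =>
    mul_nonneg (pow_nonneg hr₀ _) (sconvPow_nonneg hnn hsupp k x)
  calc ENNReal.ofReal (sconvResolvent lam r x)
      = ENNReal.ofReal (∑' k, ENNReal.ofReal (r ^ (k + 1) * sconvPow lam k x)).toReal := by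
        rw [ENNReal.tsum_toReal_eq fun _ => ENNReal.ofReal_ne_top]
        simp_rw [ENNReal.toReal_ofReal (hterm _), sconvResolvent]
    _ ≤ ∑' k, ENNReal.ofReal (r ^ (k + 1) * sconvPow lam k x) := ENNReal.ofReal_toReal_le
    _ ≤ ∑' k, ENNReal.ofReal (sconvPow lam k x) := ENNReal.tsum_le_tsum fun k =>
        ENNReal.ofReal_le_ofReal
          (mul_le_of_le_one_left (sconvPow_nonneg hnn hsupp k x) (pow_le_one₀ hr₀ hr₁))

end SconvResolvent

/-- The tail is at most the mass and, by Markov's inequality, `y` times the tail is at most the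
first moment. -/
theorem sq_setIntegral_Ioi_mul_le {f : ℝ → ℝ} (hf : Measurable f) (hf0 : ∀ x, 0 ≤ f x)
    {M m : ℝ≥0∞} (hM : ∫⁻ x, ENNReal.ofReal (f x) ≤ M) (hM_top : M ≠ ∞)
    (hm : ∫⁻ x, ENNReal.ofReal x * ENNReal.ofReal (f x) ≤ m) (hm_top : m ≠ ∞)
    {y : ℝ} (hy : 0 ≤ y) :
    (∫ x in Ioi y, f x) ^ 2 * (1 + y ^ 2) ≤ M.toReal ^ 2 + m.toReal ^ 2 := by
  set I := ∫⁻ x in Ioi y, ENNReal.ofReal (f x)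
  have hI : I ≤ M := (setLIntegral_le_lintegral _ _).trans hM
  have hMarkov : ENNReal.ofReal y * I ≤ m := calc
    ENNReal.ofReal y * I = ∫⁻ x in Ioi y, ENNReal.ofReal y * ENNReal.ofReal (f x) :=
      (lintegral_const_mul' _ _ ENNReal.ofReal_ne_top).symm
    _ ≤ ∫⁻ x in Ioi y, ENNReal.ofReal x * ENNReal.ofReal (f x) :=
      setLIntegral_mono' measurableSet_Ioi fun x hx => by gcongr; exact hx.le
    _ ≤ m := (setLIntegral_le_lintegral _ _).trans hm
  have h₁ : I.toReal ≤ M.toReal := ENNReal.toReal_mono hM_top hI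
  have h₂ : y * I.toReal ≤ m.toReal := by
    simpa [ENNReal.toReal_mul, hy] using ENNReal.toReal_mono hm_top hMarkov
  have h₀ : 0 ≤ I.toReal := ENNReal.toReal_nonneg
  rw [integral_eq_lintegral_of_nonneg_ae (.of_forall hf0) hf.aestronglyMeasurable]
  calc I.toReal ^ 2 * (1 + y ^ 2) = I.toReal ^ 2 + (y * I.toReal) ^ 2 := by ring
    _ ≤ M.toReal ^ 2 + m.toReal ^ 2 := by gcongr

theorem setIntegral_Ioi_sq_comp_mul_le {G : ℝ → ℝ} {K T : ℝ} (hT : 0 < T)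
    (hG : ∀ y, 0 < y → G y ^ 2 * (1 + y ^ 2) ≤ K) :
    ∫ x in Ioi 0, G (T * x) ^ 2 ≤ K * (π / 2) / T := by
  have hbound : ∫ y in Ioi 0, G y ^ 2 ≤ ∫ y in Ioi 0, K * (1 + y ^ 2)⁻¹ := by
    refine integral_mono_of_nonneg (.of_forall fun y => sq_nonneg _)
      (integrable_inv_one_add_sq.integrableOn.const_mul K) ?_
    filter_upwards [ae_restrict_mem measurableSet_Ioi] with y hy
    rw [← div_eq_mul_inv, le_div_iff₀ (by positivity)]
    exact hG y hy
  rw [integral_const_mul, integral_Ioi_inv_one_add_sq, arctan_zero, sub_zero] at hbound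
  rw [integral_comp_mul_left_Ioi (fun y => G y ^ 2) 0 hT, mul_zero, smul_eq_mul, div_eq_inv_mul]
  gcongr

theorem setIntegral_Ioi_sq_tail_sconvResolvent_le {lam : ℝ → ℝ} (hmeas : Measurable lam)
    (hnn : ∀ x, 0 ≤ lam x) (hsupp : ∀ x < 0, lam x = 0)
    (hL : ∫⁻ x, ENNReal.ofReal (lam x) < 1)
    (hm : ∫⁻ x, ENNReal.ofReal x * ENNReal.ofReal (lam x) < ∞)
    {r T : ℝ} (hr₀ : 0 ≤ r) (hr₁ : r ≤ 1) (hT : 0 < T) :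
    ∫ x in Ioi 0, (∫ u in Ioi (T * x), sconvResolvent lam r u) ^ 2 ≤
      ((∫⁻ x, ∑' k, ENNReal.ofReal (sconvPow lam k x)).toReal ^ 2 +
        (∫⁻ x, ENNReal.ofReal x * ∑' k, ENNReal.ofReal (sconvPow lam k x)).toReal ^ 2) *
          (π / 2) / T := by
  refine setIntegral_Ioi_sq_comp_mul_le (G := fun y => ∫ u in Ioi y, sconvResolvent lam r u) hT
    fun y hy => sq_setIntegral_Ioi_mul_le (measurable_sconvResolvent hmeas hsupp)
      (sconvResolvent_nonneg hnn hsupp hr₀) ?_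
      (lintegral_tsum_sconvPow_lt_top hmeas hnn hsupp hL).ne ?_
      (lintegral_ofReal_mul_tsum_sconvPow_lt_top hmeas hnn hsupp hL hm).ne hy.le
  · exact lintegral_mono (ofReal_sconvResolvent_le hnn hsupp hr₀ hr₁)
  · exact lintegral_mono fun x => by gcongr; exact ofReal_sconvResolvent_le hnn hsupp hr₀ hr₁ x

theorem gT_L2_bound_general (lam : ℝ → ℝ)
    (hnn : ∀ x, 0 ≤ lam x) (hsupp : ∀ x < (0:ℝ), lam x = 0)
    (hmeas : Measurable lam)
    (hint : IntegrableOn lam (Set.Ioi 0))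
    (hnorm : ∫ x in Set.Ioi (0:ℝ), lam x < 1)
    (hm : IntegrableOn (fun x => x * lam x) (Set.Ioi 0))
    (a : ℝ → ℝ) (ha : ∀ T, a T ∈ Set.Ioo (0:ℝ) 1)
    (ψ : ℝ → ℝ → ℝ)
    (hψ : ∀ T x, ψ T x = ∑' k : ℕ, (a T) ^ (k + 1) * sconvPow lam k x)
    (g : ℝ → ℝ → ℝ)
    (hg : ∀ T x, g T x = ∫ u in Set.Ioi (T * x), ψ T u) :
    (∃ c : ℝ, 0 < c ∧ ∀ T, 1 ≤ T → (∫ x in Set.Ioi (0:ℝ), (g T x) ^ 2) ≤ c / T) ∧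
    Tendsto (fun T => ∫ x in Set.Ioi (0:ℝ), (g T x) ^ 2) atTop (nhds 0) := by
  have hL : ∫⁻ x, ENNReal.ofReal (lam x) < 1 := by
    rw [lintegral_eq_setLIntegral_Ioi fun x hx => by simp [hsupp x hx],
      ← ofReal_integral_eq_lintegral_ofReal hint (.of_forall hnn)]
    exact ENNReal.ofReal_lt_one.2 hnorm
  have hmoment : ∫⁻ x, ENNReal.ofReal x * ENNReal.ofReal (lam x) < ∞ := by
    rw [lintegral_eq_setLIntegral_Ioi fun x hx => by simp [hsupp x hx],
      setLIntegral_congr_fun measurableSet_Ioi fun x hx => (ENNReal.ofReal_mul hx.le).symm]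
    exact hm.lintegral_lt_top
  set K := (∫⁻ x, ∑' k, ENNReal.ofReal (sconvPow lam k x)).toReal ^ 2 +
    (∫⁻ x, ENNReal.ofReal x * ∑' k, ENNReal.ofReal (sconvPow lam k x)).toReal ^ 2
  have hbound : ∀ T, 0 < T → ∫ x in Ioi 0, g T x ^ 2 ≤ K * (π / 2) / T := fun T hT => by
    simp only [hg, show ψ T = sconvResolvent lam (a T) from funext (hψ T)]
    exact setIntegral_Ioi_sq_tail_sconvResolvent_le hmeas hnn hsupp hL hmoment
      (ha T).1.le (ha T).2.le hT
  refine ⟨⟨K * (π / 2) + 1, by positivity, fun T hT => (hbound T (by linarith)).trans ?_⟩, ?_⟩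
  · gcongr
    linarith
  · refine tendsto_of_tendsto_of_tendsto_of_le_of_le' tendsto_const_nhds
      ((tendsto_const_nhds (x := K * (π / 2))).div_atTop tendsto_id) ?_ ?_
    · exact .of_forall fun T => setIntegral_nonneg measurableSet_Ioi fun x _ => sq_nonneg _
    · filter_upwards [eventually_gt_atTop 0] with T hT using hbound T hT

/-- With ψ^T = ∑_{k≥1} a_T^k λ^{*k} and g^T(x) = ∫_{Tx}^∞ ψ^T, one has
∫₀^∞ |g^T(x)|² dx ≤ c/T uniformly in T ≥ 1, and in particular the L² norm of g^T
tends to zero as T → ∞. -/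
theorem gT_L2_bound (lam : ℝ → ℝ)
    (hnn : ∀ x, 0 ≤ lam x) (hsupp : ∀ x < (0:ℝ), lam x = 0)
    (hmeas : Measurable lam)
    (hint : IntegrableOn lam (Set.Ioi 0))
    (hnorm : ∫ x in Set.Ioi (0:ℝ), lam x < 1)
    (hm : IntegrableOn (fun x => x * lam x) (Set.Ioi 0))
    (a : ℝ → ℝ) (ha : ∀ T, a T ∈ Set.Ioo (0:ℝ) 1)
    (haT : Tendsto a atTop (nhds 1))
    (ψ : ℝ → ℝ → ℝ)
    (hψ : ∀ T x, ψ T x = ∑' k : ℕ, (a T) ^ (k + 1) * sconvPow lam k x)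
    (g : ℝ → ℝ → ℝ)
    (hg : ∀ T x, g T x = ∫ u in Set.Ioi (T * x), ψ T u) :
    (∃ c : ℝ, 0 < c ∧ ∀ T, 1 ≤ T → (∫ x in Set.Ioi (0:ℝ), (g T x) ^ 2) ≤ c / T) ∧
    Tendsto (fun T => ∫ x in Set.Ioi (0:ℝ), (g T x) ^ 2) atTop (nhds 0) :=
  gT_L2_bound_general lam hnn hsupp hmeas hint hnorm hm a ha ψ hψ g hg
end

section
/- Let λ: ℝ₊ → ℝ₊ be integrable with ‖λ‖₁ = 1. Suppose there exist α ∈ (1/2,1) and C > 0 with α x^α ∫_x^∞ λ(s) ds → C as x → ∞. Then the Laplace transform satisfies λ̂(z) := ∫₀^∞ λ(x) e^{−zx} dx = 1 − (C/α) Γ(1−α) z^α + o(z^α) as z → 0⁺. -/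
/-!
With `T x = ∫ s in Ioi x, λ s`, Fubini turns `1 - λ̂(z)` into `z ∫₀^∞ T x e^{-zx} dx`, and the
substitution `x = u / z` into `∫₀^∞ T (u/z) e^{-u} du = z^α ∫₀^∞ g (u/z) u^{-α} e^{-u} du` with
`g x = x^α T x`. The function `g` is continuous on `[0, ∞)` and tends to `C/α` at infinity, hence is
bounded, so dominated convergence against the Gamma weight `u^{-α} e^{-u}` sends the last integral
to `(C/α) Γ(1-α)` as `z → 0⁺`.
-/

open MeasureTheory Filter Asymptotics Set Real Topology

theorem integral_Ioi_mul_intervalIntegral_eq {f g : ℝ → ℝ} (hf : IntegrableOn f (Ioi 0))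
    (hg : IntegrableOn g (Ioi 0)) :
    ∫ s in Ioi 0, f s * ∫ x in 0..s, g x = ∫ x in Ioi 0, g x * ∫ s in Ioi x, f s := by
  -- both sides integrate `f s * g x` over `0 < x < s`
  set S : Set (ℝ × ℝ) := {p | p.2 < p.1}
  have hS : MeasurableSet S := measurableSet_lt measurable_snd measurable_fst
  have hint : Integrable (S.indicator fun p => f p.1 * g p.2)
      ((volume.restrict (Ioi 0)).prod (volume.restrict (Ioi 0))) :=
    (hf.mul_prod hg).indicator hS
  calc ∫ s in Ioi 0, f s * ∫ x in 0..s, g x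
      = ∫ s in Ioi 0, ∫ x in Ioi 0, S.indicator (fun p => f p.1 * g p.2) (s, x) := by
        refine setIntegral_congr_fun measurableSet_Ioi fun s (hs : 0 < s) => ?_
        have hpt : ∀ x,
            S.indicator (fun p => f p.1 * g p.2) (s, x) = f s * (Iio s).indicator g x :=
          fun x => by by_cases h : x < s <;> simp [S, h]
        simp_rw [hpt, integral_const_mul, setIntegral_indicator measurableSet_Iio, Ioi_inter_Iio,
          intervalIntegral.integral_of_le hs.le, integral_Ioc_eq_integral_Ioo]
    _ = ∫ x in Ioi 0, ∫ s in Ioi 0, S.indicator (fun p => f p.1 * g p.2) (s, x) :=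
        integral_integral_swap hint
    _ = ∫ x in Ioi 0, g x * ∫ s in Ioi x, f s := by
        refine setIntegral_congr_fun measurableSet_Ioi fun x (hx : 0 < x) => ?_
        have hpt : ∀ s,
            S.indicator (fun p => f p.1 * g p.2) (s, x) = g x * (Ioi x).indicator f s :=
          fun s => by by_cases h : x < s <;> simp [S, h, mul_comm]
        simp_rw [hpt, integral_const_mul, setIntegral_indicator measurableSet_Ioi,
          inter_eq_self_of_subset_right (Ioi_subset_Ioi hx.le)]

theorem intervalIntegral_mul_exp_neg_mul {z : ℝ} (s : ℝ) :
    ∫ x in 0..s, z * exp (-(z * x)) = 1 - exp (-(z * s)) := by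
  have hderiv : ∀ x ∈ uIcc 0 s, HasDerivAt (fun x => -exp (-(z * x))) (z * exp (-(z * x))) x :=
    fun x _ => by
      have hlin : HasDerivAt (fun x => -(z * x)) (-z) x := by
        simpa using ((hasDerivAt_id x).const_mul z).fun_neg
      simpa [mul_comm] using hlin.exp.fun_neg
  rw [intervalIntegral.integral_eq_sub_of_hasDerivAt hderiv
    (Continuous.intervalIntegrable (by fun_prop) _ _)]
  simp only [mul_zero, neg_zero, exp_zero, sub_neg_eq_add]
  ring

theorem integral_mul_exp_neg_mul_eq_sub_integral_tail {f : ℝ → ℝ} (hf : IntegrableOn f (Ioi 0))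
    {z : ℝ} (hz : 0 < z) :
    ∫ x in Ioi 0, f x * exp (-(z * x)) =
      (∫ x in Ioi 0, f x) - ∫ u in Ioi 0, (∫ s in Ioi (u / z), f s) * exp (-u) := by
  have hkernel : Integrable (fun x => z * exp (-(z * x))) (volume.restrict (Ioi 0)) := by
    simpa only [neg_mul] using (exp_neg_integrableOn_Ioi 0 hz).const_mul z
  have hlaplace : IntegrableOn (fun x => f x * exp (-(z * x))) (Ioi 0) := by
    refine hf.mul_bdd (c := 1) (by fun_prop) ?_
    filter_upwards [ae_restrict_mem measurableSet_Ioi] with x (hx : 0 < x)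
    rw [norm_of_nonneg (exp_pos _).le, exp_le_one_iff]
    nlinarith
  have hrescale : ∫ x in Ioi 0, z * exp (-(z * x)) * ∫ s in Ioi x, f s =
      ∫ u in Ioi 0, (∫ s in Ioi (u / z), f s) * exp (-u) := by
    have := integral_comp_mul_left_Ioi (fun u => (∫ s in Ioi (u / z), f s) * exp (-u)) 0 hz
    simp only [mul_zero, mul_div_cancel_left₀ _ hz.ne', smul_eq_mul] at this
    rw [← mul_inv_cancel_left₀ hz.ne' (∫ u in Ioi 0, (∫ s in Ioi (u / z), f s) * exp (-u)), ← this,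
      ← integral_const_mul]
    exact setIntegral_congr_fun measurableSet_Ioi fun x _ => by ring
  calc ∫ x in Ioi 0, f x * exp (-(z * x))
      = (∫ x in Ioi 0, f x) - ∫ s in Ioi 0, f s * (1 - exp (-(z * s))) := by
        simp_rw [mul_sub, mul_one]
        rw [integral_sub hf hlaplace]; ring
    _ = (∫ x in Ioi 0, f x) - ∫ s in Ioi 0, f s * ∫ x in 0..s, z * exp (-(z * x)) := by
        simp_rw [intervalIntegral_mul_exp_neg_mul]
    _ = (∫ x in Ioi 0, f x) - ∫ u in Ioi 0, (∫ s in Ioi (u / z), f s) * exp (-u) := by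
        rw [integral_Ioi_mul_intervalIntegral_eq hf hkernel, hrescale]

theorem ContinuousOn.exists_forall_abs_le_of_tendsto_atTop {g : ℝ → ℝ} {a L : ℝ}
    (hg : ContinuousOn g (Ici a)) (hlim : Tendsto g atTop (𝓝 L)) :
    ∃ M, ∀ x ∈ Ici a, |g x| ≤ M := by
  obtain ⟨N, hN⟩ := eventually_atTop.1 (hlim.abs.eventually (eventually_le_nhds (lt_add_one |L|)))
  obtain ⟨C, hC⟩ :=
    isCompact_Icc.exists_bound_of_continuousOn (hg.mono fun x (hx : x ∈ Icc a N) => hx.1)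
  refine ⟨max C (|L| + 1), fun x (hx : a ≤ x) => ?_⟩
  rcases le_total x N with hxN | hxN
  · exact (hC x ⟨hx, hxN⟩).trans (le_max_left _ _)
  · exact (hN x hxN).trans (le_max_right _ _)

theorem tendsto_integral_comp_div_mul_exp_mul_rpow {g : ℝ → ℝ} {L α : ℝ} (hα : α < 1)
    (hg : ContinuousOn g (Ici 0)) (hlim : Tendsto g atTop (𝓝 L)) :
    Tendsto (fun z => ∫ u in Ioi 0, g (u / z) * (exp (-u) * u ^ (-α))) (𝓝[>] 0)
      (𝓝 (L * Gamma (1 - α))) := by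
  obtain ⟨M, hM⟩ := hg.exists_forall_abs_le_of_tendsto_atTop hlim
  have hGamma : IntegrableOn (fun u => exp (-u) * u ^ (-α)) (Ioi 0) := by
    simpa only [sub_sub_cancel_left] using GammaIntegral_convergent (sub_pos.2 hα)
  rw [Gamma_eq_integral (sub_pos.2 hα), sub_sub_cancel_left, ← integral_const_mul]
  refine tendsto_integral_filter_of_dominated_convergence (fun u => M * (exp (-u) * u ^ (-α)))
    ?_ ?_ (hGamma.const_mul M) ?_
  · filter_upwards [self_mem_nhdsWithin] with z (hz : 0 < z)
    refine ContinuousOn.aestronglyMeasurable ?_ measurableSet_Ioi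
    refine ((hg.comp (continuousOn_id.div_const z) fun u (hu : 0 < u) => ?_).mul ?_)
    · exact (div_pos hu hz).le
    · exact (continuous_exp.comp continuous_neg).continuousOn.mul
        (continuousOn_id.rpow_const fun u (hu : 0 < u) => Or.inl hu.ne')
  · filter_upwards [self_mem_nhdsWithin] with z (hz : 0 < z)
    filter_upwards [ae_restrict_mem measurableSet_Ioi] with u (hu : 0 < u)
    have hkernel : 0 ≤ exp (-u) * u ^ (-α) := by positivity
    rw [norm_mul, norm_of_nonneg hkernel, norm_eq_abs]
    exact mul_le_mul_of_nonneg_right (hM _ (div_pos hu hz).le) hkernel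
  · filter_upwards [ae_restrict_mem measurableSet_Ioi] with u (hu : 0 < u)
    have hdiv : Tendsto (fun z => u / z) (𝓝[>] 0) atTop := by
      simpa only [div_eq_mul_inv] using tendsto_inv_nhdsGT_zero.const_mul_atTop hu
    exact (hlim.comp hdiv).mul_const _

theorem integral_mul_exp_neg_mul_eq_sub_rpow_mul {f : ℝ → ℝ} (hf : IntegrableOn f (Ioi 0))
    {z : ℝ} (hz : 0 < z) (α : ℝ) :
    ∫ x in Ioi 0, f x * exp (-(z * x)) = (∫ x in Ioi 0, f x) -
      z ^ α * ∫ u in Ioi 0, ((u / z) ^ α * ∫ s in Ioi (u / z), f s) * (exp (-u) * u ^ (-α)) := by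
  rw [integral_mul_exp_neg_mul_eq_sub_integral_tail hf hz, ← integral_const_mul]
  congr 1
  refine setIntegral_congr_fun measurableSet_Ioi fun u (hu : 0 < u) => ?_
  have hzα : 0 < z ^ α := rpow_pos_of_pos hz α
  have huα : 0 < u ^ α := rpow_pos_of_pos hu α
  rw [div_rpow hu.le hz.le, rpow_neg hu.le]
  field_simp

theorem laplace_heavy_tail_general (lam : ℝ → ℝ)
    (hint : IntegrableOn lam (Set.Ioi 0))
    (hnorm : ∫ x in Set.Ioi (0:ℝ), lam x = 1)
    (α C : ℝ) (hα : α ∈ Set.Ioo (1/2 : ℝ) 1)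
    (htail : Tendsto (fun x : ℝ => α * x ^ α * ∫ s in Set.Ioi x, lam s)
      atTop (nhds C)) :
    (fun z : ℝ => (∫ x in Set.Ioi (0:ℝ), lam x * Real.exp (-(z * x))) -
        (1 - C / α * Real.Gamma (1 - α) * z ^ α))
      =o[nhdsWithin 0 (Set.Ioi 0)] fun z : ℝ => z ^ α := by
  obtain ⟨hα_half, hα_one⟩ := hα
  have hα_pos : 0 < α := by linarith
  have hg_cont : ContinuousOn (fun x => x ^ α * ∫ s in Ioi x, lam s) (Ici 0) :=
    (continuous_rpow_const hα_pos.le).continuousOn.mul hint.continuousOn_Ici_primitive_Ioi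
  have hg_lim : Tendsto (fun x => x ^ α * ∫ s in Ioi x, lam s) atTop (𝓝 (C / α)) := by
    convert htail.div_const α using 2 with x
    field_simp
  have hrem := (tendsto_const_nhds (x := C / α * Gamma (1 - α))).sub
    (tendsto_integral_comp_div_mul_exp_mul_rpow hα_one hg_cont hg_lim)
  rw [sub_self] at hrem
  refine ((isBigO_refl (fun z : ℝ => z ^ α) _).mul_isLittleO ((isLittleO_one_iff ℝ).2 hrem)).congr'
    ?_ (.of_forall fun z => mul_one _)
  filter_upwards [self_mem_nhdsWithin] with z (hz : 0 < z)
  rw [integral_mul_exp_neg_mul_eq_sub_rpow_mul hint hz α, hnorm]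
  ring

/-- heavy tail ⇒ Laplace transform expansion
λ̂(z) = 1 − (C/α) Γ(1−α) z^α + o(z^α) as z → 0⁺. -/
theorem laplace_heavy_tail (lam : ℝ → ℝ)
    (hnn : ∀ x, 0 ≤ lam x) (hsupp : ∀ x < (0:ℝ), lam x = 0)
    (hmeas : Measurable lam)
    (hint : IntegrableOn lam (Set.Ioi 0))
    (hnorm : ∫ x in Set.Ioi (0:ℝ), lam x = 1)
    (α C : ℝ) (hα : α ∈ Set.Ioo (1/2 : ℝ) 1) (hC : 0 < C)
    (htail : Tendsto (fun x : ℝ => α * x ^ α * ∫ s in Set.Ioi x, lam s)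
      atTop (nhds C)) :
    (fun z : ℝ => (∫ x in Set.Ioi (0:ℝ), lam x * Real.exp (-(z * x))) -
        (1 - C / α * Real.Gamma (1 - α) * z ^ α))
      =o[nhdsWithin 0 (Set.Ioi 0)] fun z : ℝ => z ^ α :=
  laplace_heavy_tail_general lam hint hnorm α C hα htail
end

section
/- For α ∈ (0,1) and λ > 0, the fractional integral of order 1−α of the Mittag-Leffler density satisfies I^{1−α} f^{α,λ}(t) = λ(1 − F^{α,λ}(t)) for all t > 0, where F^{α,λ}(t) = ∫₀^t f^{α,λ}(s) ds. -/
/-!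
Expanding `s ^ (β - 1) * E_{α,β}(w s^α)` as the power series `∑ wⁿ s^{αn+β-1} / Γ(αn+β)` and
integrating termwise against `(t - s) ^ (μ - 1)` with Euler's Beta integral gives
`∫₀ᵗ (t - s)^{μ-1} s^{β-1} E_{α,β}(w s^α) ds = Γ(μ) t^{β+μ-1} E_{α,β+μ}(w t^α)`; the termwise
integration is justified by absolute convergence, as `Γ(αn+β)` outgrows every geometric sequence.
For `f^{α,λ}` (`β = α`, `w = -λ`), `μ = 1 - α` turns the left side into `λ E_{α,1}(-λ t^α)` and
`μ = 1` gives `F^{α,λ}(t) = λ t^α E_{α,α+1}(-λ t^α)`; the recurrence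
`E_{α,1}(z) = 1 + z E_{α,α+1}(z)` closes the identity.
-/

open MeasureTheory

noncomputable def mittagLeffler (α β w : ℝ) : ℝ :=
  ∑' n : ℕ, w ^ n / Real.Gamma (α * n + β)

noncomputable def mlDensity (α lam t : ℝ) : ℝ :=
  lam * t ^ (α - 1) * mittagLeffler α α (-(lam * t ^ α))

open Real Set Filter

theorem Real.Gamma_mul_rpow_le_Gamma_add {x a : ℝ} (hx : 1 < x) (ha : 0 < a) :
    Gamma x * (x - 1) ^ a ≤ Gamma (x + a) := by
  have hx1 : 0 < x - 1 := by linarith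
  have hslope := convexOn_log_Gamma.slope_mono_adjacent (mem_Ioi.2 hx1)
    (mem_Ioi.2 (by linarith : 0 < x + a)) (by linarith : x - 1 < x) (by linarith : x < x + a)
  have hrec : log (Gamma x) - log (Gamma (x - 1)) = log (x - 1) := by
    have hΓ : Gamma x = (x - 1) * Gamma (x - 1) := by
      simpa using Gamma_add_one hx1.ne'
    rw [hΓ, log_mul hx1.ne' (Gamma_pos_of_pos hx1).ne', add_sub_cancel_right]
  simp only [Function.comp, sub_sub_cancel, add_sub_cancel_left, div_one, hrec,
    le_div_iff₀ ha] at hslope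
  calc Gamma x * (x - 1) ^ a = exp (log (Gamma x) + log (x - 1) * a) := by
        rw [exp_add, exp_log (Gamma_pos_of_pos (by linarith)), rpow_def_of_pos hx1]
    _ ≤ exp (log (Gamma (x + a))) := exp_le_exp.2 (by linarith)
    _ = Gamma (x + a) := exp_log (Gamma_pos_of_pos (by linarith))

theorem summable_pow_div_Gamma (w : ℝ) {α β : ℝ} (hα : 0 < α) (hβ : 0 < β) :
    Summable fun n : ℕ => w ^ n / Gamma (α * n + β) := by
  have hlin : Tendsto (fun n : ℕ => α * n + β) atTop atTop :=
    tendsto_atTop_add_const_right _ _ (tendsto_natCast_atTop_atTop.const_mul_atTop hα)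
  have hgrowth : Tendsto (fun n : ℕ => (α * n + β - 1) ^ α) atTop atTop :=
    (tendsto_rpow_atTop hα).comp (tendsto_atTop_add_const_right _ _ hlin)
  refine summable_of_ratio_norm_eventually_le (r := 1 / 2) (by norm_num) ?_
  filter_upwards [hlin.eventually_gt_atTop 1, hgrowth.eventually_ge_atTop (2 * |w|)]
    with n hx hw
  set x := α * n + β
  have hΓ : 0 < Gamma x := Gamma_pos_of_pos (by linarith)
  have hnext : α * (n + 1 : ℕ) + β = x + α := by push_cast; ring
  have hratio : 2 * |w| * Gamma x ≤ Gamma (x + α) :=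
    calc 2 * |w| * Gamma x ≤ (x - 1) ^ α * Gamma x := by gcongr
      _ ≤ Gamma (x + α) := by rw [mul_comm]; exact Gamma_mul_rpow_le_Gamma_add hx hα
  simp only [hnext, norm_div, norm_pow, Real.norm_eq_abs]
  rw [abs_of_pos hΓ, abs_of_pos (Gamma_pos_of_pos (by linarith)), div_le_iff₀
    (Gamma_pos_of_pos (by linarith)), pow_succ]
  calc |w| ^ n * |w| = 1 / 2 * (|w| ^ n / Gamma x) * (2 * |w| * Gamma x) := by
        field_simp
    _ ≤ 1 / 2 * (|w| ^ n / Gamma x) * Gamma (x + α) := by gcongr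

theorem integral_rpow_mul_sub_rpow {u v a : ℝ} (hu : 0 < u) (hv : 0 < v) (ha : 0 < a) :
    ∫ x in 0..a, x ^ (u - 1) * (a - x) ^ (v - 1) =
      Gamma u * Gamma v / Gamma (u + v) * a ^ (u + v - 1) := by
  have hB := Complex.betaIntegral_scaled u v ha
  rw [Complex.betaIntegral_eq_Gamma_mul_div _ _ (by simpa) (by simpa)] at hB
  apply Complex.ofReal_injective
  rw [← intervalIntegral.integral_ofReal]
  push_cast [← Complex.Gamma_ofReal, Complex.ofReal_cpow ha.le]
  rw [mul_comm, ← hB]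
  refine intervalIntegral.integral_congr fun x hx => ?_
  rw [uIcc_of_le ha.le] at hx
  rw [Complex.ofReal_cpow hx.1, Complex.ofReal_cpow (sub_nonneg.2 hx.2)]
  push_cast
  rfl

theorem intervalIntegrable_rpow_mul_sub_rpow {u v a : ℝ} (hu : 0 < u) (hv : 0 < v)
    (ha : 0 < a) :
    IntervalIntegrable (fun x => x ^ (u - 1) * (a - x) ^ (v - 1)) volume 0 a := by
  refine intervalIntegral.intervalIntegrable_of_integral_ne_zero ?_
  rw [integral_rpow_mul_sub_rpow hu hv ha]
  have := Gamma_pos_of_pos hu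
  have := Gamma_pos_of_pos hv
  have := Gamma_pos_of_pos (add_pos hu hv)
  positivity

theorem MeasureTheory.integral_tsum_mul_of_nonneg {X : Type*} [MeasurableSpace X] {μ : Measure X}
    {c : ℕ → ℝ} {g : ℕ → X → ℝ} (hg : ∀ n, Integrable (g n) μ) (hg0 : ∀ n, 0 ≤ᵐ[μ] g n)
    (hsum : Summable fun n => |c n| * ∫ x, g n x ∂μ) :
    ∫ x, ∑' n, c n * g n x ∂μ = ∑' n, c n * ∫ x, g n x ∂μ := by
  have hnorm : ∀ n, ∫ x, ‖c n * g n x‖ ∂μ = |c n| * ∫ x, g n x ∂μ := fun n => by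
    rw [← integral_const_mul]
    refine integral_congr_ae ((hg0 n).mono fun x hx => ?_)
    simp only [norm_mul, Real.norm_eq_abs, abs_of_nonneg hx]
  rw [← integral_tsum_of_summable_integral_norm (fun n => (hg n).const_mul (c n))
    (by simpa only [hnorm] using hsum)]
  simp_rw [integral_const_mul]

theorem rpow_mul_mittagLeffler_eq_tsum (α β w : ℝ) {s : ℝ} (hs : 0 < s) :
    s ^ (β - 1) * mittagLeffler α β (w * s ^ α) =
      ∑' n : ℕ, w ^ n / Gamma (α * n + β) * s ^ (α * n + β - 1) := by
  rw [mittagLeffler, ← tsum_mul_left]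
  refine tsum_congr fun n => ?_
  rw [mul_pow, ← rpow_mul_natCast hs.le, add_sub_assoc, rpow_add hs]
  ring

theorem integral_sub_rpow_mul_rpow_mul_mittagLeffler {α β μ w t : ℝ} (hα : 0 < α) (hβ : 0 < β)
    (hμ : 0 < μ) (ht : 0 < t) :
    ∫ s in 0..t, (t - s) ^ (μ - 1) * (s ^ (β - 1) * mittagLeffler α β (w * s ^ α)) =
      Gamma μ * (t ^ (β + μ - 1) * mittagLeffler α (β + μ) (w * t ^ α)) := by
  set g : ℕ → ℝ → ℝ := fun n s => s ^ (α * n + β - 1) * (t - s) ^ (μ - 1)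
  have hβn (n : ℕ) : 0 < α * n + β := by positivity
  have hg (n : ℕ) : ∫ s in Ioc 0 t, g n s =
      Gamma (α * n + β) * Gamma μ / Gamma (α * n + β + μ) * t ^ (α * n + β + μ - 1) := by
    rw [← intervalIntegral.integral_of_le ht.le, integral_rpow_mul_sub_rpow (hβn n) hμ ht]
  have hterm (v : ℝ) (n : ℕ) : v ^ n / Gamma (α * n + β) * ∫ s in Ioc 0 t, g n s =
      Gamma μ * (t ^ (β + μ - 1) * ((v * t ^ α) ^ n / Gamma (α * n + (β + μ)))) := by
    rw [hg, mul_pow, ← rpow_mul_natCast ht.le, show α * n + β + μ - 1 = α * n + (β + μ - 1) by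
      ring, rpow_add ht, ← add_assoc]
    field_simp [(Gamma_pos_of_pos (hβn n)).ne']
  have hsum : Summable fun n : ℕ => |w ^ n / Gamma (α * n + β)| * ∫ s in Ioc 0 t, g n s := by
    simp only [abs_div, abs_pow, abs_of_pos (Gamma_pos_of_pos (hβn _)), hterm]
    exact ((summable_pow_div_Gamma _ hα (add_pos hβ hμ)).mul_left _).mul_left _
  have hexpand : ∀ s ∈ Ioc 0 t,
      (t - s) ^ (μ - 1) * (s ^ (β - 1) * mittagLeffler α β (w * s ^ α)) =
        ∑' n : ℕ, w ^ n / Gamma (α * n + β) * g n s := fun s hs => by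
    rw [rpow_mul_mittagLeffler_eq_tsum α β w hs.1, ← tsum_mul_left]
    exact tsum_congr fun n => by ring
  have hint (n : ℕ) : IntegrableOn (g n) (Ioc 0 t) :=
    (intervalIntegrable_iff_integrableOn_Ioc_of_le ht.le).1
      (intervalIntegrable_rpow_mul_sub_rpow (hβn n) hμ ht)
  have hnonneg (n : ℕ) : 0 ≤ᵐ[volume.restrict (Ioc 0 t)] g n :=
    ae_restrict_of_forall_mem measurableSet_Ioc fun s hs =>
      mul_nonneg (rpow_nonneg hs.1.le _) (rpow_nonneg (sub_nonneg.2 hs.2) _)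
  rw [intervalIntegral.integral_of_le ht.le, setIntegral_congr_fun measurableSet_Ioc hexpand,
    integral_tsum_mul_of_nonneg hint hnonneg hsum, mittagLeffler, ← tsum_mul_left,
    ← tsum_mul_left]
  exact tsum_congr (hterm w)

theorem mittagLeffler_eq_inv_Gamma_add_mul (z : ℝ) {α β : ℝ} (hα : 0 < α) (hβ : 0 < β) :
    mittagLeffler α β z = (Gamma β)⁻¹ + z * mittagLeffler α (α + β) z := by
  rw [mittagLeffler, (summable_pow_div_Gamma z hα hβ).tsum_eq_zero_add, mittagLeffler,
    ← tsum_mul_left]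
  congr 1
  · simp
  · refine tsum_congr fun n => ?_
    rw [pow_succ, Nat.cast_succ, show α * (n + 1) + β = α * n + (α + β) by ring]
    ring

theorem fracInt_mlDensity_general (α lam : ℝ) (hα : α ∈ Set.Ioo (0:ℝ) 1) :
    ∀ t : ℝ, 0 < t →
      (1 / Real.Gamma (1 - α)) * ∫ s in (0:ℝ)..t, (t - s) ^ (-α) * mlDensity α lam s =
        lam * (1 - ∫ s in (0:ℝ)..t, mlDensity α lam s) := by
  obtain ⟨hα0, hα1⟩ := hα
  intro t ht
  have hdensity (s : ℝ) :
      mlDensity α lam s = lam * (s ^ (α - 1) * mittagLeffler α α (-lam * s ^ α)) := by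
    rw [mlDensity, neg_mul, mul_assoc]
  have hfrac : ∫ s in 0..t, (t - s) ^ (-α) * mlDensity α lam s =
      lam * (Gamma (1 - α) * mittagLeffler α 1 (-lam * t ^ α)) := by
    have h := integral_sub_rpow_mul_rpow_mul_mittagLeffler (w := -lam) hα0 hα0
      (sub_pos.2 hα1) ht
    rw [add_sub_cancel, sub_self, rpow_zero, one_mul, sub_sub_cancel_left] at h
    simp_rw [hdensity, mul_left_comm _ lam, intervalIntegral.integral_const_mul, h]
  have hcdf : ∫ s in 0..t, mlDensity α lam s =
      lam * (t ^ α * mittagLeffler α (α + 1) (-lam * t ^ α)) := by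
    have h := integral_sub_rpow_mul_rpow_mul_mittagLeffler (w := -lam) hα0 hα0 one_pos ht
    simp only [sub_self, rpow_zero, one_mul, Gamma_one, add_sub_cancel_right] at h
    simp_rw [hdensity, intervalIntegral.integral_const_mul, h]
  rw [hfrac, hcdf, mittagLeffler_eq_inv_Gamma_add_mul _ hα0 one_pos, Gamma_one, inv_one]
  field_simp [(Gamma_pos_of_pos (sub_pos.2 hα1)).ne']
  ring

/-- I^{1−α} f^{α,λ}(t) = λ (1 − F^{α,λ}(t)) for t > 0, where
F^{α,λ}(t) = ∫₀^t f^{α,λ}(s) ds and I^{1−α} is the fractional integral of order 1−α. -/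
theorem fracInt_mlDensity (α lam : ℝ) (hα : α ∈ Set.Ioo (0:ℝ) 1) (hlam : 0 < lam) :
    ∀ t : ℝ, 0 < t →
      (1 / Real.Gamma (1 - α)) * ∫ s in (0:ℝ)..t, (t - s) ^ (-α) * mlDensity α lam s =
        lam * (1 - ∫ s in (0:ℝ)..t, mlDensity α lam s) :=
  fracInt_mlDensity_general α lam hα
end
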